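/- arXiv:1402.4871 — 3 statements merged into one kernel-verified Lean document; each statement's English description precedes it below -/
import Mathlib

section
/- If a connected finite simple graph G admits a weak IASI, then G is bipartite or G has at least one mono-indexed edge; equivalently, for every weak IASI f of a connected graph G, if no edge of G is mono-indexed under f, then G is bipartite. -/
open Pointwise

/-- The induced set-label on unordered pairs: the sumset of the two vertex labels. -/
def edgeLabel {V : Type*} (f : V → Finset ℕ) : Sym2 V → Finset ℕ :=
  Sym2.lift ⟨fun u v => f u + f v, fun u v => add_comm (f u) (f v)⟩

/-- `f` is a weak integer additive set-indexer of `G`. -/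
structure IsWeakIASI {V : Type*} (G : SimpleGraph V) (f : V → Finset ℕ) : Prop where
  nonempty : ∀ v, (f v).Nonempty
  injective : Function.Injective f
  edgeInjective : Set.InjOn (edgeLabel f) G.edgeSet
  weak : ∀ u v, G.Adj u v → (edgeLabel f s(u, v)).card = max (f u).card (f v).card

/-- The number of mono-indexed edges of `G` under the labeling `f`. -/
noncomputable def monoEdgeCount {V : Type*} (G : SimpleGraph V) (f : V → Finset ℕ) : ℕ :=
  {e ∈ G.edgeSet | (edgeLabel f e).card = 1}.ncard

/-- The sparing number: the minimum number of mono-indexed edges over all weak IASIs. -/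
noncomputable def sparingNumber {V : Type*} (G : SimpleGraph V) : ℕ :=
  sInf {n | ∃ f, IsWeakIASI G f ∧ monoEdgeCount G f = n}

/-!
By Cauchy–Davenport, `|A + B| ≥ |A| + |B| - 1`, so the weak condition `|A + B| = max |A| |B|`
forces one of `A`, `B` to be a singleton. If moreover no edge is mono-indexed, the two ends of an
edge cannot both be singletons. Hence along every edge exactly one end carries a singleton label,
and "is the label a singleton" is a proper 2-colouring.
-/

theorem Finset.card_eq_one_or_card_eq_one_of_card_add_eq_max {α : Type*} [LinearOrder α]
    [Add α] [IsCancelAdd α] [AddLeftMono α] [AddRightMono α] {s t : Finset α}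
    (hs : s.Nonempty) (ht : t.Nonempty) (h : (s + t).card = max s.card t.card) :
    s.card = 1 ∨ t.card = 1 := by
  have := cauchy_davenport_add_of_linearOrder_isCancelAdd hs ht
  have := hs.card_pos
  have := ht.card_pos
  omega

theorem IsWeakIASI.card_eq_one_iff_card_ne_one {V : Type*} {G : SimpleGraph V}
    {f : V → Finset ℕ} (hf : IsWeakIASI G f) {u v : V} (huv : G.Adj u v)
    (hmono : (edgeLabel f s(u, v)).card ≠ 1) :
    (f u).card = 1 ↔ (f v).card ≠ 1 := by
  have hweak := hf.weak u v huv
  have hsingleton := Finset.card_eq_one_or_card_eq_one_of_card_add_eq_max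
    (hf.nonempty u) (hf.nonempty v) hweak
  constructor
  · intro hu hv
    rw [hweak, hu, hv, max_self] at hmono
    exact hmono rfl
  · intro hv
    exact hsingleton.resolve_right hv

theorem IsWeakIASI.colorable_two_of_forall_card_ne_one {V : Type*} {G : SimpleGraph V}
    {f : V → Finset ℕ} (hf : IsWeakIASI G f)
    (hmono : ∀ e ∈ G.edgeSet, (edgeLabel f e).card ≠ 1) : G.Colorable 2 :=
  (SimpleGraph.Coloring.mk (fun v => decide ((f v).card = 1)) fun {u v} huv hcolor => by
    have hends := hf.card_eq_one_iff_card_ne_one huv (hmono _ huv)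
    rw [decide_eq_decide] at hcolor
    tauto).colorable

theorem connected_weakIASI_bipartite_or_monoEdge_general {V : Type*}
    (G : SimpleGraph V) (f : V → Finset ℕ) (hf : IsWeakIASI G f) :
    G.Colorable 2 ∨ ∃ e ∈ G.edgeSet, (edgeLabel f e).card = 1 := by
  by_cases hmono : ∃ e ∈ G.edgeSet, (edgeLabel f e).card = 1
  · exact Or.inr hmono
  · push Not at hmono
    exact Or.inl (hf.colorable_two_of_forall_card_ne_one hmono)

/-- If a connected graph admits a weak IASI, then it is bipartite or has at least one
mono-indexed edge: under any weak IASI with no mono-indexed edge, `G` is 2-colorable. -/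
theorem connected_weakIASI_bipartite_or_monoEdge {V : Type*} [Fintype V]
    (G : SimpleGraph V) (hconn : G.Connected) (f : V → Finset ℕ) (hf : IsWeakIASI G f) :
    G.Colorable 2 ∨ ∃ e ∈ G.edgeSet, (edgeLabel f e).card = 1 :=
  connected_weakIASI_bipartite_or_monoEdge_general G f hf
end

section
/- The sparing number of an odd cycle Cₙ (n odd, n ≥ 3) is 1, and the sparing number of any bipartite graph is 0. -/
open Pointwise

section Aux
open Finset

lemma sumset_card_lb (A B : Finset ℕ) (hA : A.Nonempty) (hB : B.Nonempty) :
    A.card + B.card ≤ (A + B).card + 1 := by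
  classical
  set a0 := A.max' hA with ha0
  set b0 := B.min' hB with hb0
  set S1 := A.image (· + b0) with hS1
  set S2 := B.image (a0 + ·) with hS2
  have c1 : S1.card = A.card := card_image_of_injective _ (add_left_injective b0)
  have c2 : S2.card = B.card := card_image_of_injective _ (add_right_injective a0)
  have hsub : S1 ∪ S2 ⊆ A + B := by
    intro x hx
    rcases mem_union.1 hx with hx | hx
    · obtain ⟨a, ha, rfl⟩ := mem_image.1 hx
      exact add_mem_add ha (B.min'_mem hB)
    · obtain ⟨b, hb, rfl⟩ := mem_image.1 hx
      exact add_mem_add (A.max'_mem hA) hb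
  have hint : S1 ∩ S2 ⊆ {a0 + b0} := by
    intro x hx
    obtain ⟨hx1, hx2⟩ := mem_inter.1 hx
    obtain ⟨a, ha, rfl⟩ := mem_image.1 hx1
    obtain ⟨b, hb, hab⟩ := mem_image.1 hx2
    have h1 : a ≤ a0 := A.le_max' a ha
    have h2 : b0 ≤ b := B.min'_le b hb
    simp only [mem_singleton]
    omega
  have := card_union_add_card_inter S1 S2
  have h3 : (S1 ∪ S2).card ≤ (A + B).card := card_le_card hsub
  have h4 : (S1 ∩ S2).card ≤ 1 := by
    simpa using card_le_card hint
  omega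


lemma construct {V : Type*} [Fintype V] (G : SimpleGraph V) (c : V → Bool)
    (h : ∀ u v, G.Adj u v → ¬(c u = true ∧ c v = true))
    (hsub : {e ∈ G.edgeSet | ∀ v ∈ e, c v = false}.Subsingleton) :
    ∃ f, IsWeakIASI G f ∧
      {e ∈ G.edgeSet | (edgeLabel f e).card = 1} = {e ∈ G.edgeSet | ∀ v ∈ e, c v = false} := by
  classical
  obtain ⟨m, idx, idx_inj, idx_lt⟩ :
      ∃ (m : ℕ) (g : V → ℕ), Function.Injective g ∧ ∀ v, g v < m + 1 :=
    ⟨Fintype.card V, fun v => (Fintype.equivFin V v : ℕ),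
      fun u v h => (Fintype.equivFin V).injective (Fin.ext h),
      fun v => Nat.lt_succ_of_lt (Fintype.equivFin V v).isLt⟩
  set base : V → ℕ := fun v => (m+1) * (idx v + 1) with hbase
  set f : V → Finset ℕ := fun v => if c v then {base v, base v + 1} else {idx v} with hf
  -- decode
  have decode : ∀ u v x y, (a : idx u + base v = idx x + base y) → u = x ∧ v = y := by
    intro u v x y a
    have h1 : (idx u + base v) % (m+1) = idx u := by
      simp [hbase, Nat.add_mul_mod_self_left, Nat.mod_eq_of_lt (idx_lt u)]
    have h2 : (idx x + base y) % (m+1) = idx x := by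
      simp [hbase, Nat.add_mul_mod_self_left, Nat.mod_eq_of_lt (idx_lt x)]
    have hux : idx u = idx x := by rw [← h1, ← h2, a]
    have : base v = base y := by omega
    have : idx v = idx y := by
      have := Nat.eq_of_mul_eq_mul_left (show 0 < m+1 by omega) this
      omega
    exact ⟨idx_inj hux, idx_inj this⟩
  have labF : ∀ u v, c u = false → c v = false → edgeLabel f s(u,v) = {idx u + idx v} := by
    intro u v hu hv
    show f u + f v = _
    rw [hf]; simp only [hu, hv, if_neg, Bool.false_eq_true, if_false]
    ext x; simp [Finset.mem_add]
  have labT : ∀ u v, c u = false → c v = true →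
      edgeLabel f s(u,v) = {idx u + base v, idx u + base v + 1} := by
    intro u v hu hv
    show f u + f v = _
    rw [hf]; simp only [hu, hv, if_true, Bool.false_eq_true, if_false]
    ext x; simp [Finset.mem_add]; omega
  have labT' : ∀ u v, c u = true → c v = false →
      edgeLabel f s(u,v) = {idx v + base u, idx v + base u + 1} := by
    intro u v hu hv
    rw [Sym2.eq_swap]; exact labT v u hv hu
  have cardf : ∀ v, (f v).card = if c v then 2 else 1 := by
    intro v
    rw [hf]; by_cases hc : c v <;> simp [hc]
  refine ⟨f, ⟨?_, ?_, ?_, ?_⟩, ?_⟩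
  · intro v; rw [hf]; by_cases hc : c v <;> simp [hc]
  · intro u v huv
    by_cases hu : c u <;> by_cases hv : c v
    · simp only [hf, hu, hv, if_true] at huv
      have h1 : base u ∈ ({base v, base v + 1} : Finset ℕ) := by
        rw [← huv]; simp
      have h2 : base v ∈ ({base u, base u + 1} : Finset ℕ) := by
        rw [huv]; simp
      simp only [mem_insert, mem_singleton] at h1 h2
      have : base u = base v := by omega
      have : idx u = idx v := by
        have := Nat.eq_of_mul_eq_mul_left (show 0 < m+1 by omega) this
        omega
      exact idx_inj this
    · exfalso
      have := congrArg Finset.card huv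
      rw [cardf u, cardf v] at this; simp [hu, hv] at this
    · exfalso
      have := congrArg Finset.card huv
      rw [cardf u, cardf v] at this; simp [hu, hv] at this
    · simp only [hf, hu, hv, Bool.false_eq_true, if_false, Finset.singleton_inj] at huv
      exact idx_inj huv
  · -- edge injectivity
    have aux : ∀ u v x y, G.Adj u v → G.Adj x y → c u = false → c x = false →
        edgeLabel f s(u,v) = edgeLabel f s(x,y) → s(u,v) = s(x,y) := by
      intro u v x y huv hxy hu hx hlab
      by_cases hv : c v <;> by_cases hy : c y
      · rw [labT u v hu hv, labT x y hx hy] at hlab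
        have h1 : idx u + base v ∈ ({idx x + base y, idx x + base y + 1} : Finset ℕ) := by
          rw [← hlab]; simp
        have h2 : idx x + base y ∈ ({idx u + base v, idx u + base v + 1} : Finset ℕ) := by
          rw [hlab]; simp
        simp only [mem_insert, mem_singleton] at h1 h2
        have : idx u + base v = idx x + base y := by omega
        obtain ⟨rfl, rfl⟩ := decode u v x y this
        rfl
      · exfalso
        have := congrArg Finset.card hlab
        rw [labT u v hu hv, labF x y hx (by simpa using hy)] at this
        rw [card_pair (by omega), card_singleton] at this; omega
      · exfalso
        have := congrArg Finset.card hlab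
        rw [labF u v hu (by simpa using hv), labT x y hx hy] at this
        rw [card_singleton, card_pair (by omega)] at this; omega
      · -- both mono: use hsub
        apply hsub
        · refine ⟨huv, ?_⟩
          intro w hw; rcases Sym2.mem_iff.1 hw with rfl | rfl
          · exact hu
          · simpa using hv
        · refine ⟨hxy, ?_⟩
          intro w hw; rcases Sym2.mem_iff.1 hw with rfl | rfl
          · exact hx
          · simpa using hy
    intro e1 he1 e2 he2 hlab
    induction e1 using Sym2.ind with | _ u v =>
    induction e2 using Sym2.ind with | _ x y =>
    rw [SimpleGraph.mem_edgeSet] at he1 he2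
    have swap1 : c u = false ∨ (c v = false ∧ s(u,v) = s(v,u)) := by
      cases hu : c u
      · exact Or.inl rfl
      · refine Or.inr ⟨?_, Sym2.eq_swap⟩
        cases hv : c v
        · rfl
        · exact absurd ⟨hu, hv⟩ (h u v he1)
    have swap2 : c x = false ∨ (c y = false ∧ s(x,y) = s(y,x)) := by
      cases hx : c x
      · exact Or.inl rfl
      · refine Or.inr ⟨?_, Sym2.eq_swap⟩
        cases hy : c y
        · rfl
        · exact absurd ⟨hx, hy⟩ (h x y he2)
    rcases swap1 with hu | ⟨hv, huv'⟩ <;> rcases swap2 with hx | ⟨hy, hxy'⟩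
    · exact aux u v x y he1 he2 hu hx hlab
    · rw [hxy'] at hlab ⊢; exact aux u v y x he1 he2.symm hu hy hlab
    · rw [huv'] at hlab ⊢; exact aux v u x y he1.symm he2 hv hx hlab
    · rw [huv', hxy'] at hlab ⊢; exact aux v u y x he1.symm he2.symm hv hy hlab
  · -- weak
    intro u v huv
    have hTT := h u v huv
    by_cases hu : c u <;> by_cases hv : c v
    · exact absurd ⟨hu, hv⟩ hTT
    · rw [labT' u v hu (by simpa using hv), cardf, cardf]
      rw [card_pair (by omega)]; simp [hu, hv]
    · rw [labT u v (by simpa using hu) hv, cardf, cardf]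
      rw [card_pair (by omega)]; simp [hu, hv]
    · rw [labF u v (by simpa using hu) (by simpa using hv), cardf, cardf]
      simp [hu, hv]
  · -- mono set characterization
    ext e
    induction e using Sym2.ind with | _ u v =>
    simp only [Set.mem_setOf_eq, SimpleGraph.mem_edgeSet, Sym2.mem_iff]
    constructor
    · rintro ⟨hadj, hcard⟩
      refine ⟨hadj, ?_⟩
      have hTT := h u v hadj
      by_cases hu : c u <;> by_cases hv : c v
      · exact absurd ⟨hu, hv⟩ hTT
      · exfalso; rw [labT' u v hu (by simpa using hv), card_pair (by omega)] at hcard; omega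
      · exfalso; rw [labT u v (by simpa using hu) hv, card_pair (by omega)] at hcard; omega
      · intro w hw; rcases hw with rfl | rfl
        · simpa using hu
        · simpa using hv
    · rintro ⟨hadj, hc⟩
      refine ⟨hadj, ?_⟩
      rw [labF u v (hc u (Or.inl rfl)) (hc v (Or.inr rfl)), card_singleton]


lemma cycle_adj_succ {m : ℕ} (k : ℕ) (h : k + 1 < m + 2) :
    (SimpleGraph.cycleGraph (m+2)).Adj ⟨k, by omega⟩ ⟨k+1, h⟩ := by
  rw [SimpleGraph.cycleGraph_adj]
  right
  have heq : (⟨k+1, h⟩ : Fin (m+2)) = ⟨k, by omega⟩ + 1 := by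
    apply Fin.ext
    simp [Fin.val_add, Fin.val_one, Nat.mod_eq_of_lt h]
  rw [heq, add_sub_cancel_left]


lemma cycle_adj_last {m : ℕ} :
    (SimpleGraph.cycleGraph (m+2)).Adj ⟨m+1, by omega⟩ ⟨0, by omega⟩ := by
  rw [SimpleGraph.cycleGraph_adj]
  right
  have heq : (⟨0, by omega⟩ : Fin (m+2)) = ⟨m+1, by omega⟩ + 1 := by
    apply Fin.ext
    simp [Fin.val_add, Fin.val_one]
  rw [heq, add_sub_cancel_left]


lemma cycle_adj_val {m : ℕ} {u v : Fin (m+2)} (h : (SimpleGraph.cycleGraph (m+2)).Adj u v) :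
    u.val = (v.val + 1) % (m+2) ∨ v.val = (u.val + 1) % (m+2) := by
  rw [SimpleGraph.cycleGraph_adj] at h
  rcases h with h | h
  · left
    have h' : u = 1 + v := sub_eq_iff_eq_add.1 h
    have := congrArg Fin.val h'
    simp [Fin.val_add, Fin.val_one, Nat.add_comm] at this
    omega
  · right
    have h' : v = 1 + u := sub_eq_iff_eq_add.1 h
    have := congrArg Fin.val h'
    simp [Fin.val_add, Fin.val_one, Nat.add_comm] at this
    omega


lemma oddCycle_lower {m : ℕ} (hodd : Odd (m+2))
    (f : Fin (m+2) → Finset ℕ) (hf : IsWeakIASI (SimpleGraph.cycleGraph (m+2)) f) :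
    monoEdgeCount (SimpleGraph.cycleGraph (m+2)) f ≠ 0 := by
  intro h0
  have hfin : {e ∈ (SimpleGraph.cycleGraph (m+2)).edgeSet | (edgeLabel f e).card = 1}.Finite :=
    Set.toFinite _
  have hempty := (Set.ncard_eq_zero hfin).1 h0
  have key : ∀ u v, (SimpleGraph.cycleGraph (m+2)).Adj u v →
      ((f u).card = 1 ↔ ¬(f v).card = 1) := by
    intro u v huv
    have hne : (edgeLabel f s(u,v)).card ≠ 1 := by
      intro hcard
      have hmem : s(u,v) ∈ {e ∈ (SimpleGraph.cycleGraph (m+2)).edgeSet |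
          (edgeLabel f e).card = 1} := ⟨huv, hcard⟩
      rw [hempty] at hmem
      exact hmem
    have hweak := hf.weak u v huv
    have hlb := sumset_card_lb (f u) (f v) (hf.nonempty u) (hf.nonempty v)
    have hu1 : 1 ≤ (f u).card := (hf.nonempty u).card_pos
    have hv1 : 1 ≤ (f v).card := (hf.nonempty v).card_pos
    rw [hweak] at hne
    rw [show (f u + f v) = edgeLabel f s(u,v) from rfl, hweak] at hlb
    rcases Nat.le_total (f u).card (f v).card with hle | hle <;>
      [rw [Nat.max_eq_right hle] at hne hlb; rw [Nat.max_eq_left hle] at hne hlb] <;>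
      omega
  have alt : ∀ k, (hk : k < m+2) →
      ((f ⟨k, hk⟩).card = 1 ↔ (k % 2 = 0 ↔ (f ⟨0, by omega⟩).card = 1)) := by
    intro k
    induction k with
    | zero => intro hk; simp
    | succ k ih =>
      intro hk
      have hadj := cycle_adj_succ (m := m) k hk
      have h1 := key _ _ hadj
      have h2 := ih (by omega)
      have h3 : (k+1) % 2 = 0 ↔ ¬(k % 2 = 0) := by omega
      tauto
  have h1 := alt (m+1) (by omega)
  have h2 := key _ _ (cycle_adj_last (m := m))
  have hm : (m+1) % 2 = 0 := by
    obtain ⟨j, hj⟩ := hodd; omega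
  rw [hm] at h1
  tauto


lemma cycle_mono_set {m : ℕ} (hodd : Odd (m+2)) :
    {e ∈ (SimpleGraph.cycleGraph (m+2)).edgeSet |
        ∀ v ∈ e, (fun i : Fin (m+2) => decide (i.val % 2 = 1)) v = false}
      = {s((⟨m+1, by omega⟩ : Fin (m+2)), (⟨0, by omega⟩ : Fin (m+2)))} := by
  have hmodd : (m+1) % 2 = 0 := by obtain ⟨j, hj⟩ := hodd; omega
  ext e
  induction e using Sym2.ind with | _ u v =>
  simp only [Set.mem_setOf_eq, Set.mem_singleton_iff, Sym2.mem_iff]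
  constructor
  · rintro ⟨hadj, hc⟩
    have hu : ¬ (u.val % 2 = 1) := by simpa using hc u (Or.inl rfl)
    have hv : ¬ (v.val % 2 = 1) := by simpa using hc v (Or.inr rfl)
    have hval : u.val = (v.val + 1) % (m+2) ∨ v.val = (u.val + 1) % (m+2) :=
      cycle_adj_val (((SimpleGraph.cycleGraph (m+2)).mem_edgeSet).1 hadj)
    have hulb := u.isLt
    have hvlb := v.isLt
    rcases hval with h | h
    · by_cases hw : v.val + 1 = m + 2
      · rw [hw, Nat.mod_self] at h
        have hu0 : u = ⟨0, Nat.succ_pos (m+1)⟩ := Fin.ext h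
        have hv0 : v = ⟨m+1, Nat.lt_succ_self (m+1)⟩ := Fin.ext (show v.val = m+1 by omega)
        subst hu0; subst hv0
        exact Sym2.eq_swap
      · exfalso
        rw [Nat.mod_eq_of_lt (by omega)] at h
        omega
    · by_cases hw : u.val + 1 = m + 2
      · rw [hw, Nat.mod_self] at h
        have hu0 : u = ⟨m+1, Nat.lt_succ_self (m+1)⟩ := Fin.ext (show u.val = m+1 by omega)
        have hv0 : v = ⟨0, Nat.succ_pos (m+1)⟩ := Fin.ext h
        subst hu0; subst hv0
        rfl
      · exfalso
        rw [Nat.mod_eq_of_lt (by omega)] at h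
        omega
  · intro he
    rcases Sym2.eq_iff.1 he with ⟨rfl, rfl⟩ | ⟨rfl, rfl⟩
    · refine ⟨cycle_adj_last, ?_⟩
      rintro w (rfl | rfl) <;> simp <;> omega
    · refine ⟨cycle_adj_last.symm, ?_⟩
      rintro w (rfl | rfl) <;> simp <;> omega


lemma cycle_no_TT {m : ℕ} : ∀ u v : Fin (m+2), (SimpleGraph.cycleGraph (m+2)).Adj u v →
    ¬((fun i : Fin (m+2) => decide (i.val % 2 = 1)) u = true ∧
      (fun i : Fin (m+2) => decide (i.val % 2 = 1)) v = true) := by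
  intro u v hadj ⟨hu, hv⟩
  simp only [decide_eq_true_eq] at hu hv
  have hval : u.val = (v.val + 1) % (m+2) ∨ v.val = (u.val + 1) % (m+2) :=
    cycle_adj_val hadj
  have hulb := u.isLt
  have hvlb := v.isLt
  rcases hval with h | h
  · by_cases hw : v.val + 1 = m + 2
    · rw [hw, Nat.mod_self] at h; omega
    · rw [Nat.mod_eq_of_lt (by omega)] at h; omega
  · by_cases hw : u.val + 1 = m + 2
    · rw [hw, Nat.mod_self] at h; omega
    · rw [Nat.mod_eq_of_lt (by omega)] at h; omega

end Aux

/-- The sparing number of an odd cycle is `1` and that of a bipartite graph is `0`. -/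
theorem sparingNumber_oddCycle_and_bipartite :
    (∀ n : ℕ, 3 ≤ n → Odd n → sparingNumber (SimpleGraph.cycleGraph n) = 1) ∧
    (∀ (V : Type*) [Fintype V] (G : SimpleGraph V), G.Colorable 2 → sparingNumber G = 0) := by
  constructor
  · intro n h3 hodd
    obtain ⟨m, rfl⟩ : ∃ m, n = m + 2 := ⟨n - 2, by omega⟩
    have hset := cycle_mono_set (m := m) hodd
    obtain ⟨f, hf, hmono⟩ := construct (SimpleGraph.cycleGraph (m+2))
      (fun i => decide (i.val % 2 = 1)) cycle_no_TT
      (by rw [hset]; exact Set.subsingleton_singleton)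
    have h1 : monoEdgeCount (SimpleGraph.cycleGraph (m+2)) f = 1 := by
      rw [monoEdgeCount, hmono, hset, Set.ncard_singleton]
    have hmem : 1 ∈ {k | ∃ g, IsWeakIASI (SimpleGraph.cycleGraph (m+2)) g ∧
        monoEdgeCount (SimpleGraph.cycleGraph (m+2)) g = k} := ⟨f, hf, h1⟩
    refine le_antisymm (Nat.sInf_le hmem) ?_
    rw [Nat.one_le_iff_ne_zero]
    intro h0
    have hne : Set.Nonempty {k | ∃ g, IsWeakIASI (SimpleGraph.cycleGraph (m+2)) g ∧
        monoEdgeCount (SimpleGraph.cycleGraph (m+2)) g = k} := ⟨1, hmem⟩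
    have hmem0 := Nat.sInf_mem hne
    rw [show sInf {k | ∃ g, IsWeakIASI (SimpleGraph.cycleGraph (m+2)) g ∧
        monoEdgeCount (SimpleGraph.cycleGraph (m+2)) g = k} =
        sparingNumber (SimpleGraph.cycleGraph (m+2)) from rfl, h0] at hmem0
    obtain ⟨g, hg, hg0⟩ := hmem0
    exact oddCycle_lower hodd g hg hg0
  · intro V _ G hcol
    obtain ⟨C⟩ := hcol
    have hTT : ∀ u v, G.Adj u v → ¬((fun v => decide (C v = 1)) u = true ∧
        (fun v => decide (C v = 1)) v = true) := by
      intro u v hadj hb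
      obtain ⟨hu, hv⟩ := hb
      simp only [decide_eq_true_eq] at hu hv
      exact C.valid hadj (hu.trans hv.symm)
    have fin2 : ∀ a : Fin 2, ¬ a = 1 → a = 0 := by decide
    have hset : {e ∈ G.edgeSet | ∀ w ∈ e, (fun v => decide (C v = 1)) w = false} = ∅ := by
      ext e
      induction e using Sym2.ind with | _ u v =>
      simp only [Set.mem_setOf_eq, Set.mem_empty_iff_false, iff_false]
      rintro ⟨hadj, hc⟩
      have hu : ¬ (C u = 1) := by simpa using hc u (Sym2.mem_mk_left u v)
      have hv : ¬ (C v = 1) := by simpa using hc v (Sym2.mem_mk_right u v)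
      exact C.valid (G.mem_edgeSet.1 hadj) ((fin2 _ hu).trans (fin2 _ hv).symm)
    obtain ⟨f, hf, hmono⟩ := construct G (fun v => decide (C v = 1)) hTT
      (by rw [hset]; exact Set.subsingleton_empty)
    apply Nat.sInf_eq_zero.2
    left
    exact ⟨f, hf, by rw [monoEdgeCount, hmono, hset, Set.ncard_empty]⟩
end

section
/- If G is a path Pₙ (with at least one edge) or a cycle Cₙ (n ≥ 3), then χ(G) − φ(G) = 2, where χ(G) is the chromatic number of G and φ(G) is the sparing number of G. -/
open Pointwise

/-!
By Cauchy–Davenport, `|A + B| ≥ |A| + |B| - 1`, so the weak condition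
`|f u + f v| = max |f u| |f v|` forces one end of every edge to carry a singleton label.
An edge is then mono-indexed exactly when both of its ends are singletons, so a weak IASI
without mono-indexed edges 2-colours the graph by "singleton or not": `φ(G) = 0` forces `χ(G) ≤ 2`.
Conversely, labelling the vertices of an independent set `S` by `{2ⁱ, 2ⁱ + 1}` and all other
vertices by `{2ⁱ}` (for distinct exponents `i`) is a weak IASI whose mono-indexed edges are
the edges avoiding `S`; edge labels are told apart by their least element `2ⁱ + 2ʲ`.
For paths and even cycles take a colour class, so `χ = 2` and `φ = 0`. An odd cycle is not
2-colourable, and its odd-numbered vertices leave only the edge closing the cycle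
mono-indexed, so `χ = 3` and `φ = 1`.
-/

open Finset SimpleGraph

lemma edgeLabel_mk {V : Type*} (f : V → Finset ℕ) (u v : V) :
    edgeLabel f s(u, v) = f u + f v := rfl

lemma Sym2.eq_of_two_pow_add_two_pow_eq {a b c d : ℕ} (hab : a ≠ b) (hcd : c ≠ d)
    (h : 2 ^ a + 2 ^ b = 2 ^ c + 2 ^ d) : s(a, b) = s(c, d) := by
  have hpair : ({a, b} : Finset ℕ) = {c, d} := Finset.geomSum_injective le_rfl
    (show ∑ i ∈ {a, b}, 2 ^ i = ∑ i ∈ {c, d}, 2 ^ i by rwa [sum_pair hab, sum_pair hcd])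
  ext x
  simpa using Finset.ext_iff.1 hpair x

namespace IsWeakIASI

variable {V : Type*} {G : SimpleGraph V} {f : V → Finset ℕ}

lemma card_eq_one_or_card_eq_one (hf : IsWeakIASI G f) {u v : V} (huv : G.Adj u v) :
    (f u).card = 1 ∨ (f v).card = 1 := by
  have hcd := cauchy_davenport_add_of_linearOrder_isCancelAdd (hf.nonempty u) (hf.nonempty v)
  have hu := (hf.nonempty u).card_pos
  have hv := (hf.nonempty v).card_pos
  have hw := hf.weak u v huv
  rw [edgeLabel_mk] at hw
  omega

lemma card_edgeLabel_eq_one_iff (hf : IsWeakIASI G f) {u v : V} (huv : G.Adj u v) :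
    (edgeLabel f s(u, v)).card = 1 ↔ (f u).card = 1 ∧ (f v).card = 1 := by
  have hu := (hf.nonempty u).card_pos
  have hv := (hf.nonempty v).card_pos
  rw [hf.weak u v huv]
  omega

lemma colorable_two_of_monoEdgeCount_eq_zero [Finite V] (hf : IsWeakIASI G f)
    (h : monoEdgeCount G f = 0) : G.Colorable 2 := by
  have hempty : {e ∈ G.edgeSet | (edgeLabel f e).card = 1} = ∅ :=
    (Set.ncard_eq_zero (Set.toFinite _)).1 h
  let c : G.Coloring Bool := Coloring.mk (fun v => decide ((f v).card = 1)) fun {u v} huv hc => by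
    have hboth : (f u).card = 1 ∧ (f v).card = 1 := by
      simp only [decide_eq_decide] at hc
      rcases hf.card_eq_one_or_card_eq_one huv with hu | hv
      · exact ⟨hu, hc.1 hu⟩
      · exact ⟨hc.2 hv, hv⟩
    have hmono : s(u, v) ∈ {e ∈ G.edgeSet | (edgeLabel f e).card = 1} :=
      ⟨huv, (hf.card_edgeLabel_eq_one_iff huv).2 hboth⟩
    simp [hempty] at hmono
  simpa using c.colorable

end IsWeakIASI

section powLabel

variable {V : Type*} (ι : V → ℕ) (S : Set V) [DecidablePred (· ∈ S)]

def powLabel (v : V) : Finset ℕ :=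
  if v ∈ S then {2 ^ ι v, 2 ^ ι v + 1} else {2 ^ ι v}

variable {ι S}

lemma two_pow_mem_powLabel (v : V) : 2 ^ ι v ∈ powLabel ι S v := by
  unfold powLabel; split_ifs <;> simp

lemma two_pow_le_of_mem_powLabel {v : V} {k : ℕ} (hk : k ∈ powLabel ι S v) : 2 ^ ι v ≤ k := by
  unfold powLabel at hk; split_ifs at hk <;> simp at hk <;> omega

lemma powLabel_of_notMem {v : V} (hv : v ∉ S) : powLabel ι S v = {2 ^ ι v} := if_neg hv

lemma card_powLabel_eq_one_iff {v : V} : (powLabel ι S v).card = 1 ↔ v ∉ S := by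
  unfold powLabel; split_ifs <;> simp_all

lemma isLeast_powLabel_add (u v : V) :
    IsLeast (↑(powLabel ι S u + powLabel ι S v) : Set ℕ) (2 ^ ι u + 2 ^ ι v) := by
  refine ⟨add_mem_add (two_pow_mem_powLabel u) (two_pow_mem_powLabel v), ?_⟩
  intro x hx
  obtain ⟨a, ha, b, hb, rfl⟩ := mem_add.1 (mem_coe.1 hx)
  exact add_le_add (two_pow_le_of_mem_powLabel ha) (two_pow_le_of_mem_powLabel hb)

lemma card_powLabel_add {u v : V} (h : u ∉ S ∨ v ∉ S) :
    (powLabel ι S u + powLabel ι S v).card =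
      max (powLabel ι S u).card (powLabel ι S v).card := by
  rcases h with hu | hv
  · have := (powLabel ι S v).card_pos.2 ⟨_, two_pow_mem_powLabel v⟩
    rw [powLabel_of_notMem hu, card_singleton_add, card_singleton]
    omega
  · have := (powLabel ι S u).card_pos.2 ⟨_, two_pow_mem_powLabel u⟩
    rw [powLabel_of_notMem hv, card_add_singleton, card_singleton]
    omega

lemma isWeakIASI_powLabel {G : SimpleGraph V} (hι : Function.Injective ι) (hS : G.IsIndepSet S) :
    IsWeakIASI G (powLabel ι S) where
  nonempty v := ⟨_, two_pow_mem_powLabel v⟩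
  injective u v h := by
    have huv := two_pow_le_of_mem_powLabel (h ▸ two_pow_mem_powLabel (S := S) u)
    have hvu := two_pow_le_of_mem_powLabel (h.symm ▸ two_pow_mem_powLabel (S := S) v)
    exact hι (Nat.pow_right_injective le_rfl (le_antisymm hvu huv))
  edgeInjective := by
    intro e he e' he' h
    induction e using Sym2.ind with | _ u v => ?_
    induction e' using Sym2.ind with | _ u' v' => ?_
    rw [edgeLabel_mk, edgeLabel_mk] at h
    have hleast := (isLeast_powLabel_add (ι := ι) (S := S) u v).unique
      (h ▸ isLeast_powLabel_add u' v')
    have hne : ι u ≠ ι v := hι.ne (G.ne_of_adj he)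
    have hne' : ι u' ≠ ι v' := hι.ne (G.ne_of_adj he')
    exact Sym2.map.injective hι (Sym2.eq_of_two_pow_add_two_pow_eq hne hne' hleast)
  weak u v huv := card_powLabel_add (by by_contra! h; exact hS h.1 h.2 (G.ne_of_adj huv) huv)

lemma monoEdgeCount_powLabel {G : SimpleGraph V} (hι : Function.Injective ι)
    (hS : G.IsIndepSet S) :
    monoEdgeCount G (powLabel ι S) = {e ∈ G.edgeSet | ∀ v ∈ e, v ∉ S}.ncard := by
  unfold monoEdgeCount
  congr 1
  ext e
  induction e using Sym2.ind with | _ u v => ?_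
  simp only [Set.mem_ofPred_eq, mem_edgeSet, Sym2.mem_iff, forall_eq_or_imp, forall_eq]
  refine and_congr_right fun huv => ?_
  rw [(isWeakIASI_powLabel hι hS).card_edgeLabel_eq_one_iff huv, card_powLabel_eq_one_iff,
    card_powLabel_eq_one_iff]

end powLabel

section sparingNumber

variable {V : Type*} {G : SimpleGraph V}

lemma exists_isWeakIASI [Countable V] : ∃ f, IsWeakIASI G f := by
  classical
  obtain ⟨ι, hι⟩ := exists_injective_nat V
  exact ⟨_, isWeakIASI_powLabel (S := ∅) hι (Set.pairwise_empty _)⟩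

lemma sparingNumber_le_ncard [Countable V] {S : Set V} (hS : G.IsIndepSet S) :
    sparingNumber G ≤ {e ∈ G.edgeSet | ∀ v ∈ e, v ∉ S}.ncard := by
  classical
  obtain ⟨ι, hι⟩ := exists_injective_nat V
  exact Nat.sInf_le ⟨_, isWeakIASI_powLabel hι hS, monoEdgeCount_powLabel hι hS⟩

theorem sparingNumber_eq_zero_iff [Finite V] : sparingNumber G = 0 ↔ G.Colorable 2 := by
  constructor
  · intro h
    rcases Nat.sInf_eq_zero.1 h with ⟨f, hf, hzero⟩ | hempty
    · exact hf.colorable_two_of_monoEdgeCount_eq_zero hzero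
    · obtain ⟨f, hf⟩ := exists_isWeakIASI (G := G)
      exact (Set.eq_empty_iff_forall_notMem.1 hempty _ ⟨f, hf, rfl⟩).elim
  · rintro ⟨c⟩
    let c₂ : G.Coloring Bool := recolorOfEquiv G finTwoEquiv c
    have hS : G.IsIndepSet {v | c₂ v} := fun u hu v hv _ huv => c₂.valid huv (hu.trans hv.symm)
    have hedges : {e ∈ G.edgeSet | ∀ v ∈ e, v ∉ {v | c₂ v}} = ∅ := by
      ext e
      induction e using Sym2.ind with | _ u v => ?_
      simp only [Set.mem_ofPred_eq, mem_edgeSet, Sym2.mem_iff, forall_eq_or_imp, forall_eq,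
        Bool.not_eq_true, Set.mem_empty_iff_false, iff_false, not_and]
      intro huv hu hv
      exact c₂.valid huv (hu.trans hv.symm)
    have hle := sparingNumber_le_ncard hS
    rwa [hedges, Set.ncard_empty, Nat.le_zero] at hle

end sparingNumber

lemma Fin.val_eq_add_one_of_val_sub_eq_one {n : ℕ} {u v : Fin n} (h : (u - v).val = 1) :
    u.val = v.val + 1 ∨ (u.val = 0 ∧ v.val + 1 = n) := by
  have := u.isLt
  have := v.isLt
  rw [Fin.val_sub] at h
  rcases Nat.lt_or_ge (n - v + u) n with hlt | hge
  · rw [Nat.mod_eq_of_lt hlt] at h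
    omega
  · rw [Nat.mod_eq_sub_mod hge, Nat.mod_eq_of_lt (by omega)] at h
    omega

lemma val_cases_of_cycleGraph_adj {n : ℕ} {u v : Fin n} (h : (cycleGraph n).Adj u v) :
    u.val = v.val + 1 ∨ (u.val = 0 ∧ v.val + 1 = n) ∨
      v.val = u.val + 1 ∨ (v.val = 0 ∧ u.val + 1 = n) := by
  rw [cycleGraph_adj'] at h
  rcases h with h | h
  · rcases Fin.val_eq_add_one_of_val_sub_eq_one h with h | h <;> simp [h]
  · rcases Fin.val_eq_add_one_of_val_sub_eq_one h with h | h <;> simp [h]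

lemma sparingNumber_pathGraph (n : ℕ) : sparingNumber (pathGraph n) = 0 :=
  sparingNumber_eq_zero_iff.2 (by simpa using (pathGraph.bicoloring n).colorable)

lemma sparingNumber_cycleGraph_of_even {n : ℕ} (hEven : Even n) :
    sparingNumber (cycleGraph n) = 0 :=
  sparingNumber_eq_zero_iff.2 (by simpa using (cycleGraph.bicoloring_of_even n hEven).colorable)

lemma sparingNumber_cycleGraph_of_odd {n : ℕ} (h : 2 ≤ n) (hOdd : Odd n) :
    sparingNumber (cycleGraph n) = 1 := by
  rw [Nat.odd_iff] at hOdd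
  have hS : (cycleGraph n).IsIndepSet {v | v.val % 2 = 1} := by
    intro u hu v hv _ huv
    simp only [Set.mem_ofPred_eq] at hu hv
    rcases val_cases_of_cycleGraph_adj huv with h | h | h | h <;> omega
  have hedges : {e ∈ (cycleGraph n).edgeSet | ∀ v ∈ e, v ∉ {v : Fin n | v.val % 2 = 1}} ⊆
      {s(⟨0, by omega⟩, ⟨n - 1, by omega⟩)} := by
    intro e
    induction e using Sym2.ind with | _ u v => ?_
    simp only [Set.mem_ofPred_eq, mem_edgeSet, Sym2.mem_iff, forall_eq_or_imp, forall_eq,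
      Set.mem_singleton_iff]
    rintro ⟨huv, hu, hv⟩
    simp only [Sym2.eq_iff, Fin.ext_iff]
    rcases val_cases_of_cycleGraph_adj huv with h | h | h | h <;> omega
  have hle : sparingNumber (cycleGraph n) ≤ 1 :=
    (sparingNumber_le_ncard hS).trans
      ((Set.ncard_le_ncard hedges (Set.finite_singleton _)).trans (Set.ncard_singleton _).le)
  have hne : sparingNumber (cycleGraph n) ≠ 0 := fun h0 => by
    have h3 := chromaticNumber_cycleGraph_of_odd n h (Nat.odd_iff.2 hOdd)
    have h2 := (sparingNumber_eq_zero_iff.1 h0).chromaticNumber_le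
    rw [h3] at h2
    norm_num at h2
  omega

/-- If `G` is a path (with at least one edge) or a cycle, then `χ(G) - φ(G) = 2`. -/
theorem chromaticNumber_sub_sparingNumber_path_cycle :
    (∀ n : ℕ, 2 ≤ n →
      (SimpleGraph.pathGraph n).chromaticNumber
        - (sparingNumber (SimpleGraph.pathGraph n) : ℕ∞) = 2) ∧
    (∀ n : ℕ, 3 ≤ n →
      (SimpleGraph.cycleGraph n).chromaticNumber
        - (sparingNumber (SimpleGraph.cycleGraph n) : ℕ∞) = 2) := by
  refine ⟨fun n hn => ?_, fun n hn => ?_⟩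
  · rw [chromaticNumber_pathGraph n hn, sparingNumber_pathGraph]
    rfl
  · rcases Nat.even_or_odd n with hEven | hOdd
    · rw [chromaticNumber_cycleGraph_of_even n (by omega) hEven,
        sparingNumber_cycleGraph_of_even hEven]
      rfl
    · rw [chromaticNumber_cycleGraph_of_odd n (by omega) hOdd,
        sparingNumber_cycleGraph_of_odd (by omega) hOdd]
      rfl
end
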